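/- A polynomial with real coefficients whose roots are all real has exactly as many positive roots (counted with multiplicity) as there are sign changes in its sequence of nonzero coefficients. -/

import Mathlib

open Polynomial

/-- The list of nonzero coefficients of a real polynomial, in order. -/
noncomputable def nonzeroCoeffList (p : ℝ[X]) : List ℝ :=
  ((List.range (p.natDegree + 1)).map p.coeff).filter (fun a => decide (a ≠ 0))

/-- The number of sign changes in the sequence of nonzero coefficients. -/
noncomputable def signChanges (p : ℝ[X]) : ℕ :=
  ((nonzeroCoeffList p).zip (nonzeroCoeffList p).tail).countP
    (fun ab => decide (ab.1 * ab.2 < 0))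

/-!
Write `V` for `Polynomial.signVariations`, which agrees with `signChanges`. Descartes' bound
`Polynomial.roots_countP_pos_le_signVariations` gives `#(positive roots of p) ≤ V(p)` and,
applied to `p(-X)`, `#(negative roots of p) ≤ V(p(-X))`.
Conversely `V(p) + V(p(-X)) ≤ deg p - ord₀ p`, where `ord₀ p` is the multiplicity of the
root `0`: two consecutive nonzero coefficients in degrees `e < d` contribute at most `d - e`
sign changes to `p` and `p(-X)` together, because for odd `d - e` the substitution `X ↦ -X`
flips their relative sign. If all roots are real, `p` has `deg p - ord₀ p` nonzero roots, so
both bounds are equalities.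
-/

namespace List

variable {α : Type*}

theorem length_destutter'_ne [DecidableEq α] (l : List α) (a : α) :
    (l.destutter' (· ≠ ·) a).length = ((a :: l).zip l).countP (fun x => x.1 ≠ x.2) + 1 := by
  induction l generalizing a with
  | nil => simp
  | cons b l ih => by_cases h : a = b <;> simp [ih, h]

theorem length_destutter_ne_sub_one [DecidableEq α] (l : List α) :
    (l.destutter (· ≠ ·)).length - 1 = (l.zip l.tail).countP (fun x => x.1 ≠ x.2) := by
  cases l with
  | nil => simp
  | cons a l => simp [destutter_cons', length_destutter'_ne]

theorem zip_dropLast_tail (l : List α) : l.dropLast.zip l.tail = l.zip l.tail := by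
  rw [zip_eq_zip_take_min, zip_eq_zip_take_min (l₁ := l)]
  simp [dropLast_eq_take, take_take]

theorem zip_tail_reverse (l : List α) : l.reverse.zip l.reverse.tail = (l.tail.zip l).reverse := by
  rw [← zip_dropLast_tail, dropLast_reverse, tail_reverse, zip, ← reverse_zipWith (by simp),
    ← zip, ← zip_swap, zip_dropLast_tail, zip_swap]

end List

theorem Multiset.card_eq_countP_pos_add_countP_neg_add_count_zero {α : Type*} [LinearOrder α]
    [Zero α] (s : Multiset α) :
    card s = s.countP (0 < ·) + s.countP (· < 0) + s.count 0 := by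
  induction s using Multiset.induction_on with
  | empty => simp
  | cons a s ih =>
    rcases lt_trichotomy a 0 with h | rfl | h
    · simp [h, h.not_gt, Multiset.count_cons_of_ne h.ne', ih]; omega
    · simp [ih]; omega
    · simp [h, h.not_gt, Multiset.count_cons_of_ne h.ne, ih]; omega

theorem sign_ne_sign_iff_mul_neg {R : Type*} [Ring R] [LinearOrder R] [IsStrictOrderedRing R]
    {a b : R} (ha : a ≠ 0) (hb : b ≠ 0) :
    SignType.sign a ≠ SignType.sign b ↔ a * b < 0 := by
  rcases ha.lt_or_gt with ha | ha <;> rcases hb.lt_or_gt with hb | hb <;>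
    simp [ha, hb, mul_neg_iff, ha.not_gt, hb.not_gt]

/-- The sign changes that two consecutive nonzero coefficients, of signs `s` and `t` in degrees
`d > e`, contribute to `p` and to `p(-X)`. -/
theorem SignType.ite_add_ite_le_sub (s t : SignType) (hs : s ≠ 0) {d e : ℕ} (hed : e < d) :
    (if s = -t then 1 else 0) + (if (-1) ^ d * s = -((-1) ^ e * t) then 1 else 0) ≤ d - e := by
  obtain ⟨k, rfl⟩ := Nat.exists_eq_add_of_lt hed
  rcases k with _ | k
  · rw [pow_succ, show e + 0 + 1 - e = 1 by omega]
    rcases neg_one_pow_eq_or SignType e with h | h <;> rw [h] <;> revert hs <;>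
      cases s <;> cases t <;> decide
  · split_ifs <;> omega

namespace Polynomial

section Semiring

variable {R : Type*} [Semiring R]

theorem natTrailingDegree_le_natTrailingDegree_eraseLead {p : R[X]} (h : p.eraseLead ≠ 0) :
    p.natTrailingDegree ≤ p.eraseLead.natTrailingDegree := by
  apply natTrailingDegree_le_of_ne_zero
  have hlt : p.eraseLead.natTrailingDegree < p.natDegree :=
    (natTrailingDegree_le_natDegree _).trans_lt <|
      (eraseLead_natDegree_lt_or_eraseLead_eq_zero p).resolve_right h
  rw [← eraseLead_coeff_of_ne _ hlt.ne]
  exact mt trailingCoeff_eq_zero.mp h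

theorem signVariations_eq_zero_of_eraseLead_eq_zero [LinearOrder R] {p : R[X]}
    (h : p.eraseLead = 0) : p.signVariations = 0 := by
  rw [← eraseLead_add_monomial_natDegree_leadingCoeff p, h, zero_add, signVariations_monomial]

end Semiring

section Ring

variable {R : Type*} [Ring R]

theorem coeff_comp_neg_X (p : R[X]) (n : ℕ) : (p.comp (-X)).coeff n = (-1) ^ n * p.coeff n := by
  rw [show (-X : R[X]) = C (-1) * X by simp, comp_C_mul_X_coeff,
    ((Commute.neg_one_right _).pow_right n).eq]

theorem natDegree_comp_neg_X (p : R[X]) : (p.comp (-X)).natDegree = p.natDegree :=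
  natDegree_eq_natDegree degree_comp_neg_X

theorem eraseLead_comp_neg_X (p : R[X]) : (p.comp (-X)).eraseLead = p.eraseLead.comp (-X) := by
  ext n
  by_cases hn : n = p.natDegree <;>
    simp [eraseLead_coeff, coeff_comp_neg_X, natDegree_comp_neg_X, hn]

theorem signVariations_add_signVariations_comp_neg_X_le [LinearOrder R] [IsStrictOrderedRing R]
    (p : R[X]) :
    p.signVariations + (p.comp (-X)).signVariations ≤ p.natDegree - p.natTrailingDegree := by
  induction hd : p.natDegree using Nat.strong_induction_on generalizing p with
  | _ d ih =>
  rcases eq_or_ne p.eraseLead 0 with hE | hE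
  · rw [signVariations_eq_zero_of_eraseLead_eq_zero hE, signVariations_eq_zero_of_eraseLead_eq_zero
      (by rw [eraseLead_comp_neg_X, hE, zero_comp])]
    omega
  have hp : p ≠ 0 := fun h => hE (by simp [h])
  have hlt := (eraseLead_natDegree_lt_or_eraseLead_eq_zero p).resolve_right hE
  have hIH := ih _ (hd ▸ hlt) p.eraseLead rfl
  have htrail := natTrailingDegree_le_natTrailingDegree_eraseLead hE
  have hstep := SignType.ite_add_ite_le_sub (SignType.sign p.leadingCoeff)
    (SignType.sign p.eraseLead.leadingCoeff) (by simpa using hp) hlt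
  rw [signVariations_eq_eraseLead_add_ite hp,
    signVariations_eq_eraseLead_add_ite (comp_neg_X_eq_zero_iff.not.mpr hp),
    eraseLead_comp_neg_X, comp_neg_X_leadingCoeff_eq, comp_neg_X_leadingCoeff_eq,
    sign_mul, sign_mul, sign_pow, sign_pow, Left.sign_neg, sign_one]
  have hE_le := natTrailingDegree_le_natDegree p.eraseLead
  omega

end Ring

end Polynomial

theorem reverse_nonzeroCoeffList (p : ℝ[X]) :
    (nonzeroCoeffList p).reverse = p.coeffList.filter (· ≠ 0) := by
  rcases eq_or_ne p 0 with rfl | hp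
  · simp [nonzeroCoeffList]
  · simp [nonzeroCoeffList, coeffList, withBotSucc_degree_eq_natDegree_add_one hp,
      List.filter_reverse]

theorem signChanges_eq_signVariations (p : ℝ[X]) : signChanges p = p.signVariations := by
  set L := nonzeroCoeffList p
  have hL : ∀ x ∈ L, x ≠ 0 := fun x hx => by
    simpa [L, nonzeroCoeffList] using (List.mem_filter.mp hx).2
  have hfilter :
      (p.coeffList.map SignType.sign).filter (· ≠ 0) = L.reverse.map SignType.sign := by
    rw [reverse_nonzeroCoeffList, List.filter_map]
    congr 1
    exact List.filter_congr fun x _ => by simp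
  rw [signVariations, hfilter, List.length_destutter_ne_sub_one, List.map_reverse,
    List.zip_tail_reverse, List.countP_reverse, ← List.zip_swap, List.countP_map,
    ← List.map_tail, List.zip_map, List.countP_map, signChanges]
  refine List.countP_congr fun x hx => ?_
  have h₁ := hL _ (List.of_mem_zip hx).1
  have h₂ := hL _ (List.mem_of_mem_tail (List.of_mem_zip hx).2)
  simp [← sign_ne_sign_iff_mul_neg h₁ h₂, ne_comm]

theorem descartes_rule_of_signs_exact_general (p : ℝ[X])
    (hreal : (p.roots).card = p.natDegree) :
    (p.roots.filter (fun x => 0 < x)).card = signChanges p := by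
  have hpos := roots_countP_pos_le_signVariations p
  have hneg : (p.roots.filter (· < 0)).card ≤ (p.comp (-X)).signVariations := by
    simpa [Multiset.countP_map] using roots_countP_pos_le_signVariations (p.comp (-X))
  have hzero : p.roots.count 0 = p.natTrailingDegree := by
    rw [count_roots, rootMultiplicity_eq_natTrailingDegree']
  have hbound := signVariations_add_signVariations_comp_neg_X_le p
  have hcard := p.roots.card_eq_countP_pos_add_countP_neg_add_count_zero
  have htrail := natTrailingDegree_le_natDegree p
  simp only [Multiset.countP_eq_card_filter] at hpos hcard
  rw [signChanges_eq_signVariations]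
  omega

/-- Harriot–Descartes rule of signs, exact form: if all roots of a real polynomial
are real (it splits over ℝ), the number of positive roots counted with multiplicity
equals the number of sign changes of its nonzero coefficients. -/
theorem descartes_rule_of_signs_exact (p : ℝ[X]) (hp : p ≠ 0)
    (hreal : (p.roots).card = p.natDegree) :
    (p.roots.filter (fun x => 0 < x)).card = signChanges p :=
  descartes_rule_of_signs_exact_general p hreal
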